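/- Let Ω be a bounded Lipschitz domain in ℝ^N, 0 < s < 1, and let ω ∈ C(Ω) ∩ L^r(Ω) for some r > 1 satisfy ω > 0 in Ω, ∫_Ω ω dx = 1, and K_ε := ess sup_{0 ≤ t ≤ ε} ∫_{δ^{-1}{t}} ω dH_{N-1} < ∞ for some ε > 0. Let v_s be the unique nonnegative minimizer of |·|_s on M_s. If w ∈ M_s satisfies |w|_s = μ_s := inf{|u|_s : u ∈ M_s}, then either w = v_s or w = -v_s; that is, the only minimizers of |·|_s on M_s are ±v_s, and v_s > 0 in Ω. -/

import Mathlib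

open MeasureTheory Metric Set Filter Topology
open scoped ENNReal NNReal

noncomputable section

/-- Euclidean space ℝ^N. -/
abbrev Euc (N : ℕ) := EuclideanSpace ℝ (Fin N)

variable {N : ℕ}

/-- Distance to the boundary of `Ω`. -/
def distBdry (Ω : Set (Euc N)) (x : Euc N) : ℝ := Metric.infDist x (frontier Ω)

/-- The β-Hölder seminorm `|u|_β` of `u` over the closure of `Ω`. -/
def holderSemi (β : ℝ) (Ω : Set (Euc N)) (u : Euc N → ℝ) : ℝ :=
  sSup {q : ℝ | ∃ x ∈ closure Ω, ∃ y ∈ closure Ω, x ≠ y ∧ q = |u x - u y| / dist x y ^ β}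

/-- Membership in `C_0^{0,β}(closure Ω)`: β-Hölder continuous on the closure of `Ω`
and vanishing on the boundary `∂Ω`. -/
def MemC0Holder (β : ℝ) (Ω : Set (Euc N)) (u : Euc N → ℝ) : Prop :=
  (∃ C : ℝ, ∀ x ∈ closure Ω, ∀ y ∈ closure Ω, |u x - u y| ≤ C * dist x y ^ β) ∧
  (∀ x ∈ frontier Ω, u x = 0)

/-- The p-th power `[u]_{s,p}^p` of the Gagliardo seminorm. -/
def gagliardo (N : ℕ) (s p : ℝ) (u : Euc N → ℝ) : ℝ≥0∞ :=
  ∫⁻ x : Euc N, ∫⁻ y : Euc N,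
    ENNReal.ofReal (|u x - u y| ^ p / dist x y ^ ((N : ℝ) + s * p))

/-- Membership in the fractional Sobolev space `W_0^{s,p}(Ω)`. -/
def MemW0 (s p : ℝ) (Ω : Set (Euc N)) (u : Euc N → ℝ) : Prop :=
  MemLp u (ENNReal.ofReal p) volume ∧ (∀ᵐ x : Euc N, x ∉ Ω → u x = 0) ∧
  gagliardo N s p u < ⊤

/-- `∫_Ω (log|u|)⁺ ω dx` as an extended nonnegative real. -/
def logIntPos (Ω : Set (Euc N)) (ω u : Euc N → ℝ) : ℝ≥0∞ :=
  ∫⁻ x in Ω, ENNReal.ofReal (ω x) * ENNReal.ofReal (Real.log |u x|)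

/-- `∫_Ω (log|u|)⁻ ω dx` as an extended nonnegative real,
with the convention `log 0 = -∞`. -/
def logIntNeg (Ω : Set (Euc N)) (ω u : Euc N → ℝ) : ℝ≥0∞ :=
  ∫⁻ x in Ω, ENNReal.ofReal (ω x) *
    (if u x = 0 then ⊤ else ENNReal.ofReal (-Real.log |u x|))

/-- The extended-real integral `∫_Ω (log|u|) ω dx` (which may equal `-∞`). -/
def logInt (Ω : Set (Euc N)) (ω u : Euc N → ℝ) : EReal :=
  (logIntPos Ω ω u : EReal) - (logIntNeg Ω ω u : EReal)

/-- The exponential map `EReal → ℝ≥0∞`, with `exp (-∞) = 0` and `exp ∞ = ∞`. -/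
def expE (x : EReal) : ℝ≥0∞ :=
  if x = ⊥ then 0 else if x = ⊤ then ⊤ else ENNReal.ofReal (Real.exp x.toReal)

/-- `k(u) := exp (∫_Ω (log|u|) ω dx)`. -/
def kval (Ω : Set (Euc N)) (ω u : Euc N → ℝ) : ℝ≥0∞ := expE (logInt Ω ω u)

/-- `Λ_p := inf { [u]_{s,p}^p : u ∈ M_p }` where
`M_p = {u ∈ W_0^{s,p}(Ω) : ∫_Ω (log|u|) ω dx = 0}`. -/
def LambdaP (N : ℕ) (s p : ℝ) (Ω : Set (Euc N)) (ω : Euc N → ℝ) : ℝ≥0∞ :=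
  sInf {Λ : ℝ≥0∞ | ∃ u : Euc N → ℝ,
    MemW0 s p Ω u ∧ logInt Ω ω u = 0 ∧ Λ = gagliardo N s p u}

/-- Membership in `M_s := {u ∈ C_0^{0,s}(closure Ω) : k(u) = 1}`. -/
def MemMs (s : ℝ) (Ω : Set (Euc N)) (ω u : Euc N → ℝ) : Prop :=
  MemC0Holder s Ω u ∧ kval Ω ω u = 1

/-- `μ_s := inf {|u|_s : u ∈ M_s}`. -/
def muS (s : ℝ) (Ω : Set (Euc N)) (ω : Euc N → ℝ) : ℝ :=
  sInf {m : ℝ | ∃ u : Euc N → ℝ, MemMs s Ω ω u ∧ m = holderSemi s Ω u}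

/-- `K_ε := ess sup_{0 ≤ t ≤ ε} ∫_{δ^{-1}{t}} ω dH_{N-1}`. -/
def Keps (N : ℕ) (Ω : Set (Euc N)) (ω : Euc N → ℝ) (ε : ℝ) : ℝ≥0∞ :=
  essSup (fun t : ℝ =>
      ∫⁻ x in distBdry Ω ⁻¹' {t}, ENNReal.ofReal (ω x)
        ∂(MeasureTheory.Measure.hausdorffMeasure ((N : ℝ) - 1)))
    (volume.restrict (Icc (0 : ℝ) ε))

/-- `u` is a weak solution of `(-Δ_p)^s u = Λ u⁻¹ ω` in `Ω`. -/
def IsWeakSolution (N : ℕ) (s p : ℝ) (Ω : Set (Euc N)) (ω : Euc N → ℝ) (Λ : ℝ)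
    (u : Euc N → ℝ) : Prop :=
  ∀ φ : Euc N → ℝ, MemW0 s p Ω φ →
    (∫ x : Euc N, ∫ y : Euc N,
        |u x - u y| ^ (p - 2) * (u x - u y) * (φ x - φ y) / dist x y ^ ((N : ℝ) + s * p))
      = Λ * ∫ x in Ω, (u x)⁻¹ * φ x * ω x

/-- `(L_∞^+ u)(x) := sup_{y ≠ x} (u(y)-u(x))/|y-x|^s`. -/
def Lplus (s : ℝ) (u : Euc N → ℝ) (x : Euc N) : ℝ :=
  ⨆ y : {y : Euc N // y ≠ x}, (u y.1 - u x) / dist y.1 x ^ s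

/-- `(L_∞^- u)(x) := inf_{y ≠ x} (u(y)-u(x))/|y-x|^s`. -/
def Lminus (s : ℝ) (u : Euc N → ℝ) (x : Euc N) : ℝ :=
  ⨅ y : {y : Euc N // y ≠ x}, (u y.1 - u x) / dist y.1 x ^ s

/-- `u` is a viscosity supersolution of `L u = 0` in `Ω`. -/
def IsViscSupersol (Ω : Set (Euc N)) (L : (Euc N → ℝ) → Euc N → ℝ)
    (u : Euc N → ℝ) : Prop :=
  ∀ x₀ ∈ Ω, ∀ φ : Euc N → ℝ, ContDiff ℝ 1 φ → HasCompactSupport φ →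
    φ x₀ = u x₀ → (∀ x, φ x ≤ u x) → L φ x₀ ≤ 0

/-- `u` is a viscosity subsolution of `L u = 0` in `Ω`. -/
def IsViscSubsol (Ω : Set (Euc N)) (L : (Euc N → ℝ) → Euc N → ℝ)
    (u : Euc N → ℝ) : Prop :=
  ∀ x₀ ∈ Ω, ∀ φ : Euc N → ℝ, ContDiff ℝ 1 φ → HasCompactSupport φ →
    φ x₀ = u x₀ → (∀ x, u x ≤ φ x) → 0 ≤ L φ x₀

/-!
If the nonnegative minimizer `v` vanished at some `x₀ ∈ Ω`, raise it to
`w = max v (ε - |v|_s |x - x₀|^s)⁺`: the cone has the same Hölder constant, so `|w|_s ≤ μ_s`,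
while `w ≥ v` with strict inequality near `x₀` gives `∫ ω log w > ∫ ω log v = 0`, i.e.
`k(w) > 1`. Then `w / k(w) ∈ M_s` has seminorm `< μ_s`, a contradiction; so `v > 0` in `Ω`.
For any minimizer `w`, `|w|` is a nonnegative minimizer, hence `|w| = v > 0`, and the
continuous function `w` has constant sign on the connected set `Ω`.
-/

section Cone

variable {X : Type*} [PseudoMetricSpace X] {s : ℝ}

lemma abs_rpow_sub_rpow_le {a b : ℝ} (ha : 0 ≤ a) (hb : 0 ≤ b) (hs0 : 0 ≤ s) (hs1 : s ≤ 1) :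
    |a ^ s - b ^ s| ≤ |a - b| ^ s := by
  have key : ∀ {a b : ℝ}, 0 ≤ a → 0 ≤ b → a ^ s ≤ b ^ s + |a - b| ^ s := fun {a b} ha hb =>
    (Real.rpow_le_rpow ha (by linarith [le_abs_self (a - b)]) hs0).trans
      (Real.rpow_add_le_add_rpow hb (abs_nonneg _) hs0 hs1)
  rw [abs_sub_le_iff]
  constructor
  · linarith [key ha hb]
  · linarith [abs_sub_comm a b ▸ key hb ha]

lemma abs_dist_rpow_sub_dist_rpow_le (hs0 : 0 ≤ s) (hs1 : s ≤ 1) (x y z : X) :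
    |dist x z ^ s - dist y z ^ s| ≤ dist x y ^ s :=
  (abs_rpow_sub_rpow_le dist_nonneg dist_nonneg hs0 hs1).trans
    (Real.rpow_le_rpow (abs_nonneg _) (abs_dist_sub_le x y z) hs0)

def holderCone (x₀ : X) (ε L s : ℝ) (x : X) : ℝ := max (ε - L * dist x x₀ ^ s) 0

variable {x₀ : X} {ε L : ℝ}

lemma holderCone_self (hs : s ≠ 0) (hε : 0 ≤ ε) : holderCone x₀ ε L s x₀ = ε := by
  simp [holderCone, Real.zero_rpow hs, hε]

lemma holderCone_le (hε : 0 ≤ ε) (hL : 0 ≤ L) (x : X) : holderCone x₀ ε L s x ≤ ε :=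
  max_le (sub_le_self _ (by positivity)) hε

lemma holderCone_eq_zero {x : X} (h : ε ≤ L * dist x x₀ ^ s) : holderCone x₀ ε L s x = 0 :=
  max_eq_right (by linarith)

lemma abs_holderCone_sub_le (hL : 0 ≤ L) (hs0 : 0 ≤ s) (hs1 : s ≤ 1) (x y : X) :
    |holderCone x₀ ε L s x - holderCone x₀ ε L s y| ≤ L * dist x y ^ s := by
  refine (abs_max_sub_max_le_max _ _ _ _).trans (max_le ?_ (by rw [sub_self, abs_zero]; positivity))
  rw [show ε - L * dist x x₀ ^ s - (ε - L * dist y x₀ ^ s)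
      = -(L * (dist x x₀ ^ s - dist y x₀ ^ s)) by ring, abs_neg, abs_mul, abs_of_nonneg hL]
  exact mul_le_mul_of_nonneg_left (abs_dist_rpow_sub_dist_rpow_le hs0 hs1 x y x₀) hL

lemma continuous_holderCone (hs0 : 0 ≤ s) : Continuous (holderCone x₀ ε L s) :=
  (continuous_const.sub (continuous_const.mul
    ((continuous_id.dist continuous_const).rpow_const fun _ => Or.inr hs0))).max continuous_const

end Cone

section Holder

variable {β C : ℝ} {Ω : Set (Euc N)} {u : Euc N → ℝ}

lemma holderSemi_nonneg : 0 ≤ holderSemi β Ω u :=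
  Real.sSup_nonneg <| by rintro q ⟨x, -, y, -, -, rfl⟩; positivity

lemma holderSemi_le (hC : 0 ≤ C)
    (h : ∀ x ∈ closure Ω, ∀ y ∈ closure Ω, |u x - u y| ≤ C * dist x y ^ β) :
    holderSemi β Ω u ≤ C := by
  refine Real.sSup_le ?_ hC
  rintro q ⟨x, hx, y, hy, hxy, rfl⟩
  exact div_le_of_le_mul₀ (by positivity) hC (h x hx y hy)

lemma abs_sub_le_holderSemi_mul
    (hu : ∃ C, ∀ x ∈ closure Ω, ∀ y ∈ closure Ω, |u x - u y| ≤ C * dist x y ^ β)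
    {x y : Euc N} (hx : x ∈ closure Ω) (hy : y ∈ closure Ω) :
    |u x - u y| ≤ holderSemi β Ω u * dist x y ^ β := by
  obtain ⟨C, hC⟩ := hu
  rcases eq_or_ne x y with rfl | hxy
  · rw [sub_self, abs_zero]
    exact mul_nonneg holderSemi_nonneg (Real.rpow_nonneg dist_nonneg β)
  have hd : 0 < dist x y ^ β := Real.rpow_pos_of_pos (dist_pos.2 hxy) β
  rw [← div_le_iff₀ hd]
  refine le_csSup ⟨C, ?_⟩ ⟨x, hx, y, hy, hxy, rfl⟩
  rintro q ⟨x, hx, y, hy, hxy, rfl⟩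
  exact (div_le_iff₀ (Real.rpow_pos_of_pos (dist_pos.2 hxy) β)).2 (hC x hx y hy)

lemma continuousOn_of_holder (hβ : 0 < β)
    (hu : ∃ C, ∀ x ∈ closure Ω, ∀ y ∈ closure Ω, |u x - u y| ≤ C * dist x y ^ β) :
    ContinuousOn u (closure Ω) := by
  intro x hx
  rw [ContinuousWithinAt, tendsto_iff_dist_tendsto_zero]
  have hlim : Tendsto (fun y => holderSemi β Ω u * dist y x ^ β) (𝓝[closure Ω] x) (𝓝 0) := by
    have := (((continuous_id.dist (continuous_const (y := x))).rpow_const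
      fun _ => Or.inr hβ.le).const_mul (holderSemi β Ω u)).tendsto x
    simp only [id, dist_self, Real.zero_rpow hβ.ne', mul_zero] at this
    exact this.mono_left nhdsWithin_le_nhds
  refine squeeze_zero' (Eventually.of_forall fun _ => dist_nonneg) ?_ hlim
  filter_upwards [self_mem_nhdsWithin] with y hy using abs_sub_le_holderSemi_mul hu hy hx

end Holder

section LogIntegral

lemma eq_zero_of_expE_eq_one {x : EReal} (h : expE x = 1) : x = 0 := by
  unfold expE at h
  split_ifs at h with hbot htop
  · exact absurd h zero_ne_one
  · exact absurd h ENNReal.top_ne_one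
  · rw [ENNReal.ofReal_eq_one, Real.exp_eq_one_iff] at h
    rw [← EReal.coe_toReal htop hbot, h, EReal.coe_zero]

lemma expE_coe (r : ℝ) : expE r = ENNReal.ofReal (Real.exp r) := by
  simp [expE]

lemma EReal.ne_top_of_coe_sub_coe_eq_zero {a b : ℝ≥0∞} (h : (a : EReal) - b = 0) :
    a ≠ ⊤ ∧ b ≠ ⊤ := by
  have hb : b ≠ ⊤ := by
    rintro rfl
    simp [EReal.sub_top] at h
  refine ⟨?_, hb⟩
  rintro rfl
  rw [← EReal.coe_ennreal_toReal hb] at h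
  simp at h

lemma integrable_of_lintegral_ofReal_ne_top {α : Type*} [MeasurableSpace α] {μ : Measure α}
    {f : α → ℝ} (hf : AEMeasurable f μ) (hpos : ∫⁻ x, ENNReal.ofReal (f x) ∂μ ≠ ⊤)
    (hneg : ∫⁻ x, ENNReal.ofReal (-f x) ∂μ ≠ ⊤) : Integrable f μ := by
  have h := (integrable_toReal_of_lintegral_ne_top hf.ennreal_ofReal hpos).sub
    (integrable_toReal_of_lintegral_ne_top hf.neg.ennreal_ofReal hneg)
  refine h.congr (Eventually.of_forall fun x => ?_)
  simp only [ENNReal.toReal_ofReal']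
  rcases le_total 0 (f x) with hx | hx <;> simp [hx]

variable {Ω : Set (Euc N)} {ω u : Euc N → ℝ}

lemma logIntPos_eq_lintegral (hΩ : MeasurableSet Ω) (hω : ∀ x ∈ Ω, 0 ≤ ω x) :
    logIntPos Ω ω u = ∫⁻ x in Ω, ENNReal.ofReal (ω x * Real.log |u x|) := by
  refine setLIntegral_congr_fun hΩ fun x hx => ?_
  rw [ENNReal.ofReal_mul (hω x hx)]

lemma logIntNeg_eq_lintegral (hΩ : MeasurableSet Ω) (hω : ∀ x ∈ Ω, 0 ≤ ω x)
    (hu : ∀ᵐ x ∂volume.restrict Ω, u x ≠ 0) :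
    logIntNeg Ω ω u = ∫⁻ x in Ω, ENNReal.ofReal (-(ω x * Real.log |u x|)) := by
  refine lintegral_congr_ae ?_
  filter_upwards [hu, ae_restrict_mem hΩ] with x hux hx
  rw [if_neg hux, ← mul_neg, ENNReal.ofReal_mul (hω x hx)]

lemma ae_ne_zero_of_logIntNeg_ne_top (hΩ : MeasurableSet Ω) (hω : ∀ x ∈ Ω, 0 < ω x)
    (hu : AEMeasurable u (volume.restrict Ω)) (h : logIntNeg Ω ω u ≠ ⊤) :
    ∀ᵐ x ∂volume.restrict Ω, u x ≠ 0 := by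
  rw [ae_iff]
  simp only [ne_eq, not_not]
  contrapose! h
  refine eq_top_iff.2 ((ENNReal.top_mul h).symm.trans_le ?_)
  change ⊤ * volume.restrict Ω (u ⁻¹' {0}) ≤ _
  rw [← lintegral_indicator_const₀ (hu.nullMeasurable (measurableSet_singleton 0))]
  refine lintegral_mono_ae ?_
  filter_upwards [ae_restrict_mem hΩ] with x hx
  by_cases hux : u x = 0
  · simp [hux, ENNReal.mul_top, hω x hx]
  · simp [hux]

lemma logInt_eq_integral (hΩ : MeasurableSet Ω) (hω : ∀ x ∈ Ω, 0 ≤ ω x)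
    (hu : ∀ᵐ x ∂volume.restrict Ω, u x ≠ 0)
    (hint : Integrable (fun x => ω x * Real.log |u x|) (volume.restrict Ω)) :
    logInt Ω ω u = ((∫ x in Ω, ω x * Real.log |u x| : ℝ) : EReal) := by
  rw [logInt, integral_eq_lintegral_pos_part_sub_lintegral_neg_part hint,
    ← logIntPos_eq_lintegral hΩ hω, ← logIntNeg_eq_lintegral hΩ hω hu, EReal.coe_sub,
    EReal.coe_ennreal_toReal, EReal.coe_ennreal_toReal]
  · exact (logIntNeg_eq_lintegral hΩ hω hu ▸ hint.neg.lintegral_lt_top).ne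
  · exact (logIntPos_eq_lintegral hΩ hω ▸ hint.lintegral_lt_top).ne

lemma kval_eq_exp_integral (hΩ : MeasurableSet Ω) (hω : ∀ x ∈ Ω, 0 ≤ ω x)
    (hu : ∀ᵐ x ∂volume.restrict Ω, u x ≠ 0)
    (hint : Integrable (fun x => ω x * Real.log |u x|) (volume.restrict Ω)) :
    kval Ω ω u = ENNReal.ofReal (Real.exp (∫ x in Ω, ω x * Real.log |u x|)) := by
  rw [kval, logInt_eq_integral hΩ hω hu hint, expE_coe]

lemma integrable_of_kval_eq_one (hΩ : MeasurableSet Ω) (hω : ∀ x ∈ Ω, 0 ≤ ω x)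
    (hu : ∀ᵐ x ∂volume.restrict Ω, u x ≠ 0)
    (hF : AEMeasurable (fun x => ω x * Real.log |u x|) (volume.restrict Ω))
    (hk : kval Ω ω u = 1) :
    Integrable (fun x => ω x * Real.log |u x|) (volume.restrict Ω) := by
  obtain ⟨hpos, hneg⟩ := EReal.ne_top_of_coe_sub_coe_eq_zero (eq_zero_of_expE_eq_one hk)
  exact integrable_of_lintegral_ofReal_ne_top hF (logIntPos_eq_lintegral hΩ hω ▸ hpos)
    (logIntNeg_eq_lintegral hΩ hω hu ▸ hneg)

lemma integral_eq_zero_of_kval_eq_one (hΩ : MeasurableSet Ω) (hω : ∀ x ∈ Ω, 0 ≤ ω x)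
    (hu : ∀ᵐ x ∂volume.restrict Ω, u x ≠ 0)
    (hF : AEMeasurable (fun x => ω x * Real.log |u x|) (volume.restrict Ω))
    (hk : kval Ω ω u = 1) : ∫ x in Ω, ω x * Real.log |u x| = 0 := by
  have h := eq_zero_of_expE_eq_one hk
  rwa [logInt_eq_integral hΩ hω hu (integrable_of_kval_eq_one hΩ hω hu hF hk),
    EReal.coe_eq_zero] at h

end LogIntegral

lemma abs_log_le_abs_log_of_le {a b : ℝ} (ha : 0 < a) (hab : a ≤ b) (hb : b ≤ max a 1) :
    |Real.log b| ≤ |Real.log a| := by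
  rcases le_or_gt b 1 with hb1 | hb1
  · rw [abs_of_nonpos (Real.log_nonpos (ha.le.trans hab) hb1),
      abs_of_nonpos (Real.log_nonpos ha.le (hab.trans hb1))]
    linarith [Real.log_le_log ha hab]
  · rw [le_antisymm ((le_max_iff.1 hb).resolve_right hb1.not_ge) hab]

lemma integral_mul_log_lt_of_le {α : Type*} [MeasurableSpace α] {μ : Measure α}
    {ω v w : α → ℝ} (hω : ∀ᵐ x ∂μ, 0 < ω x)
    (hvw : ∀ᵐ x ∂μ, 0 < |v x| ∧ |v x| ≤ |w x| ∧ |w x| ≤ max |v x| 1)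
    (hv : Integrable (fun x => ω x * Real.log |v x|) μ)
    (hw : AEStronglyMeasurable (fun x => ω x * Real.log |w x|) μ)
    (hlt : μ {x | |v x| < |w x|} ≠ 0) :
    Integrable (fun x => ω x * Real.log |w x|) μ ∧
      ∫ x, ω x * Real.log |v x| ∂μ < ∫ x, ω x * Real.log |w x| ∂μ := by
  have hint : Integrable (fun x => ω x * Real.log |w x|) μ := by
    refine hv.mono hw ?_
    filter_upwards [hω, hvw] with x hωx ⟨h0, h1, h2⟩
    rw [norm_mul, norm_mul]
    exact mul_le_mul_of_nonneg_left (abs_log_le_abs_log_of_le h0 h1 h2) (norm_nonneg _)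
  refine ⟨hint, ?_⟩
  rw [← sub_pos, ← integral_sub hint hv, integral_pos_iff_support_of_nonneg_ae
    (f := fun x => ω x * Real.log |w x| - ω x * Real.log |v x|) ?_ (hint.sub hv)]
  · refine pos_iff_ne_zero.2 fun h => hlt (measure_mono_null_ae ?_ h)
    filter_upwards [hω, hvw] with x hωx ⟨h0, _, _⟩ hx
    exact (sub_pos.2 (mul_lt_mul_of_pos_left (Real.log_lt_log h0 hx) hωx)).ne'
  · filter_upwards [hω, hvw] with x hωx ⟨h0, h1, _⟩
    exact sub_nonneg.2 (mul_le_mul_of_nonneg_left (Real.log_le_log h0 h1) hωx.le)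

section Minimizers

variable {s : ℝ} {Ω : Set (Euc N)} {ω u : Euc N → ℝ}

lemma muS_le_holderSemi (hu : MemMs s Ω ω u) : muS s Ω ω ≤ holderSemi s Ω u :=
  csInf_le ⟨0, by rintro m ⟨u, -, rfl⟩; exact holderSemi_nonneg⟩ ⟨u, hu, rfl⟩

lemma memMs_abs (hu : MemMs s Ω ω u) : MemMs s Ω ω fun x => |u x| := by
  obtain ⟨⟨⟨C, hC⟩, hu0⟩, hk⟩ := hu
  refine ⟨⟨⟨C, fun x hx y hy => (abs_abs_sub_abs_le_abs_sub _ _).trans (hC x hx y hy)⟩,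
    fun x hx => by simp [hu0 x hx]⟩, ?_⟩
  simpa [kval, logInt, logIntPos, logIntNeg] using hk

lemma holderSemi_abs_le (hu : MemC0Holder s Ω u) :
    holderSemi s Ω (fun x => |u x|) ≤ holderSemi s Ω u :=
  holderSemi_le holderSemi_nonneg fun _ hx _ hy =>
    (abs_abs_sub_abs_le_abs_sub _ _).trans (abs_sub_le_holderSemi_mul hu.1 hx hy)

-- `k` is positively homogeneous, so `u / k(u) ∈ M_s`.
lemma muS_mul_exp_integral_le (hΩ : MeasurableSet Ω) (hω : ∀ x ∈ Ω, 0 ≤ ω x)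
    (hω_norm : ∫ x in Ω, ω x = 1) (hu : MemC0Holder s Ω u)
    (hu0 : ∀ᵐ x ∂volume.restrict Ω, u x ≠ 0)
    (hint : Integrable (fun x => ω x * Real.log |u x|) (volume.restrict Ω)) :
    muS s Ω ω * Real.exp (∫ x in Ω, ω x * Real.log |u x|) ≤ holderSemi s Ω u := by
  set I := ∫ x in Ω, ω x * Real.log |u x|
  set t := Real.exp (-I)
  have ht : 0 < t := Real.exp_pos _
  have hω_int : Integrable ω (volume.restrict Ω) :=
    Integrable.of_integral_ne_zero (by rw [hω_norm]; exact one_ne_zero)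
  have hF : (fun x => ω x * Real.log |t * u x|)
      =ᵐ[volume.restrict Ω] fun x => -I * ω x + ω x * Real.log |u x| := by
    filter_upwards [hu0] with x hx
    rw [abs_mul, abs_of_pos ht, Real.log_mul ht.ne' (abs_ne_zero.2 hx), Real.log_exp]
    ring
  have hk : kval Ω ω (fun x => t * u x) = 1 := by
    rw [kval_eq_exp_integral hΩ hω (hu0.mono fun x hx => mul_ne_zero ht.ne' hx)
      (((hω_int.const_mul _).add hint).congr hF.symm), integral_congr_ae hF,
      integral_add (hω_int.const_mul _) hint, integral_const_mul, hω_norm, mul_one,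
      neg_add_cancel, Real.exp_zero, ENNReal.ofReal_one]
  have htu : ∀ x ∈ closure Ω, ∀ y ∈ closure Ω,
      |t * u x - t * u y| ≤ t * holderSemi s Ω u * dist x y ^ s := fun x hx y hy => by
    rw [← mul_sub, abs_mul, abs_of_pos ht, mul_assoc]
    exact mul_le_mul_of_nonneg_left (abs_sub_le_holderSemi_mul hu.1 hx hy) ht.le
  have hMs : MemMs s Ω ω (fun x => t * u x) :=
    ⟨⟨⟨_, htu⟩, fun x hx => by simp [hu.2 x hx]⟩, hk⟩
  calc muS s Ω ω * Real.exp I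
      ≤ t * holderSemi s Ω u * Real.exp I := by
        gcongr
        exact (muS_le_holderSemi hMs).trans
          (holderSemi_le (mul_nonneg ht.le holderSemi_nonneg) htu)
    _ = holderSemi s Ω u := by
        rw [mul_comm t, mul_assoc, ← Real.exp_add, neg_add_cancel, Real.exp_zero, mul_one]

end Minimizers

section Positivity

variable {s : ℝ} {Ω : Set (Euc N)} {ω v : Euc N → ℝ}

lemma exists_raise_of_eq_zero (hΩo : IsOpen Ω) (hs0 : 0 < s) (hs1 : s ≤ 1)
    (hv : MemC0Holder s Ω v) (hv0 : ∀ x ∉ Ω, v x = 0) (hμ : 0 < holderSemi s Ω v)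
    {x₀ : Euc N} (hx₀ : x₀ ∈ Ω) (hvx₀ : v x₀ = 0) :
    ∃ w : Euc N → ℝ, MemC0Holder s Ω w ∧ holderSemi s Ω w ≤ holderSemi s Ω v ∧
      (∀ x, v x ≤ w x ∧ w x ≤ max (v x) 1) ∧ volume.restrict Ω {x | v x < w x} ≠ 0 := by
  set μ := holderSemi s Ω v
  obtain ⟨R, hR, hRΩ⟩ := Metric.isOpen_iff.1 hΩo x₀ hx₀
  -- `ε ≤ μ R^s` keeps the cone inside `ball x₀ R ⊆ Ω`; `ε ≤ 1` keeps `log w ≤ max (log v) 0`.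
  set ε := min 1 (μ * R ^ s)
  have hε : 0 < ε := lt_min one_pos (by positivity)
  set c := holderCone x₀ ε μ s
  have hc0 : ∀ x ∉ Ω, c x = 0 := fun x hx =>
    holderCone_eq_zero <| (min_le_right _ _).trans <| mul_le_mul_of_nonneg_left
      (Real.rpow_le_rpow hR.le (not_lt.1 fun h => hx (hRΩ (mem_ball.2 h))) hs0.le) hμ.le
  have hw : ∀ x ∈ closure Ω, ∀ y ∈ closure Ω,
      |max (v x) (c x) - max (v y) (c y)| ≤ μ * dist x y ^ s := fun x hx y hy =>
    (abs_max_sub_max_le_max _ _ _ _).trans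
      (max_le (abs_sub_le_holderSemi_mul hv.1 hx hy) (abs_holderCone_sub_le hμ.le hs0.le hs1 x y))
  refine ⟨fun x => max (v x) (c x), ⟨⟨μ, hw⟩, fun x hx => ?_⟩, holderSemi_le hμ.le hw,
    fun x => ⟨le_max_left _ _, max_le_max le_rfl ((holderCone_le hε.le hμ.le x).trans
      (min_le_left _ _))⟩, ?_⟩
  · have hx : x ∉ Ω := (hΩo.frontier_eq ▸ hx).2
    simp [hv0 x hx, hc0 x hx]
  have hU : IsOpen (Ω ∩ (fun x => c x - v x) ⁻¹' Ioi 0) :=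
    (((continuous_holderCone hs0.le).continuousOn).sub
      ((continuousOn_of_holder hs0 hv.1).mono subset_closure)).isOpen_inter_preimage hΩo isOpen_Ioi
  refine (lt_of_lt_of_le (hU.measure_pos volume ⟨x₀, hx₀, ?_⟩) ?_).ne'
  · simp [c, hvx₀, holderCone_self hs0.ne' hε.le, hε]
  · refine (measure_mono fun x hx => ?_).trans (Measure.le_restrict_apply _ _)
    exact ⟨by simpa [lt_max_iff] using hx.2, hx.1⟩

theorem pos_of_holderSemi_eq_muS (hΩo : IsOpen Ω) (hs0 : 0 < s) (hs1 : s ≤ 1)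
    (hω_pos : ∀ x ∈ Ω, 0 < ω x) (hω_norm : ∫ x in Ω, ω x = 1)
    (hv : MemMs s Ω ω v) (hv_nn : ∀ x, 0 ≤ v x) (hv0 : ∀ x ∉ Ω, v x = 0)
    (hv_min : holderSemi s Ω v = muS s Ω ω) {x₀ : Euc N} (hx₀ : x₀ ∈ Ω) : 0 < v x₀ := by
  refine (hv_nn x₀).lt_of_ne' fun hvx₀ => ?_
  have hΩ := hΩo.measurableSet
  have hω : ∀ x ∈ Ω, 0 ≤ ω x := fun x hx => (hω_pos x hx).le
  have hcont : ∀ {u}, MemC0Holder s Ω u → AEMeasurable u (volume.restrict Ω) := fun hu =>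
    ((continuousOn_of_holder hs0 hu.1).mono subset_closure).aemeasurable hΩ
  have hlog : ∀ {u}, MemC0Holder s Ω u →
      AEMeasurable (fun x => ω x * Real.log |u x|) (volume.restrict Ω) := fun hu =>
    (Integrable.of_integral_ne_zero (by simp [hω_norm])).aemeasurable.mul
      (hcont hu).abs.log
  have hv_ae : ∀ᵐ x ∂volume.restrict Ω, v x ≠ 0 :=
    ae_ne_zero_of_logIntNeg_ne_top hΩ hω_pos (hcont hv.1)
      (EReal.ne_top_of_coe_sub_coe_eq_zero (eq_zero_of_expE_eq_one hv.2)).2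
  -- Otherwise `v` would be constant, hence zero, on `Ω`, which has positive measure.
  have hμ : 0 < holderSemi s Ω v := by
    refine holderSemi_nonneg.lt_of_ne' fun h0 => (hΩo.measure_pos volume ⟨x₀, hx₀⟩).ne' ?_
    rw [← Measure.restrict_apply_univ, Measure.measure_univ_eq_zero, ← ae_eq_bot,
      ← eventually_false_iff_eq_bot]
    filter_upwards [hv_ae, ae_restrict_mem hΩ] with x hx hxΩ
    have := abs_sub_le_holderSemi_mul hv.1.1 (subset_closure hxΩ) (subset_closure hx₀)
    rw [h0, zero_mul, hvx₀, sub_zero, abs_nonpos_iff] at this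
    exact hx this
  obtain ⟨w, hw, hwv, hvw, hlt⟩ := exists_raise_of_eq_zero hΩo hs0 hs1 hv.1 hv0 hμ hx₀ hvx₀
  have hw_nn : ∀ x, 0 ≤ w x := fun x => (hv_nn x).trans (hvw x).1
  obtain ⟨hFw, hI⟩ := integral_mul_log_lt_of_le (v := v) (w := w)
    (ae_restrict_of_forall_mem hΩ hω_pos) (by
      filter_upwards [hv_ae] with x hx
      simp only [abs_of_nonneg (hv_nn x), abs_of_nonneg (hw_nn x)]
      exact ⟨(hv_nn x).lt_of_ne' hx, hvw x⟩)
    (integrable_of_kval_eq_one hΩ hω hv_ae (hlog hv.1) hv.2) (hlog hw).aestronglyMeasurable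
    (by simpa [abs_of_nonneg (hv_nn _), abs_of_nonneg (hw_nn _)] using hlt)
  rw [integral_eq_zero_of_kval_eq_one hΩ hω hv_ae (hlog hv.1) hv.2] at hI
  have hw_ae : ∀ᵐ x ∂volume.restrict Ω, w x ≠ 0 :=
    hv_ae.mono fun x hx => ((hv_nn x).lt_of_ne' hx |>.trans_le (hvw x).1).ne'
  have hle := (muS_mul_exp_integral_le hΩ hω hω_norm hw hw_ae hFw).trans (hwv.trans hv_min.le)
  rw [← hv_min] at hle
  nlinarith [Real.one_lt_exp_iff.2 hI]

end Positivity

theorem minimizers_are_plus_minus_vs_general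
    (N : ℕ) (Ω : Set (Euc N)) (hΩo : IsOpen Ω)
    (hΩc : IsConnected Ω)
    (s : ℝ) (hs0 : 0 < s) (hs1 : s < 1)
    (ω : Euc N → ℝ) (hω_pos : ∀ x ∈ Ω, 0 < ω x)
    (hω_norm : ∫ x in Ω, ω x = 1)
    (v : Euc N → ℝ) (hv : MemMs s Ω ω v) (hv_nn : ∀ x, 0 ≤ v x)
    (hv0 : ∀ x ∉ Ω, v x = 0) (hv_min : holderSemi s Ω v = muS s Ω ω)
    (hv_unique : ∀ w : Euc N → ℝ, MemMs s Ω ω w → (∀ x, 0 ≤ w x) →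
      (∀ x ∉ Ω, w x = 0) → holderSemi s Ω w = muS s Ω ω → w = v) :
    (∀ x ∈ Ω, 0 < v x) ∧
    ∀ w : Euc N → ℝ, MemMs s Ω ω w → (∀ x ∉ Ω, w x = 0) →
      holderSemi s Ω w = muS s Ω ω →
      w = v ∨ w = fun x => -(v x) := by
  have hpos : ∀ x ∈ Ω, 0 < v x := fun x =>
    pos_of_holderSemi_eq_muS hΩo hs0 hs1.le hω_pos hω_norm hv hv_nn hv0 hv_min
  refine ⟨hpos, fun w hw hw0 hw_min => ?_⟩
  have habs : (fun x => |w x|) = v :=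
    hv_unique _ (memMs_abs hw) (fun x => abs_nonneg _) (fun x hx => by simp [hw0 x hx])
      (le_antisymm ((holderSemi_abs_le hw.1).trans hw_min.le) (muS_le_holderSemi (memMs_abs hw)))
  have hcont : ∀ {u}, MemMs s Ω ω u → ContinuousOn u Ω := fun hu =>
    (continuousOn_of_holder hs0 hu.1.1).mono subset_closure
  have hsq : EqOn (w ^ 2) (v ^ 2) Ω := fun x _ => by simp [← habs]
  have hext : ∀ {g : Euc N → ℝ}, (∀ x ∉ Ω, g x = 0) → EqOn w g Ω → w = g := fun hg h =>
    funext fun x => by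
      by_cases hx : x ∈ Ω
      exacts [h hx, (hw0 x hx).trans (hg x hx).symm]
  exact (hΩc.isPreconnected.eq_or_eq_neg_of_sq_eq (hcont hw) (hcont hv) hsq
    fun hx => (hpos _ hx).ne').imp (hext hv0) (hext fun x hx => by simp [hv0 x hx])

/-- The unique nonnegative minimizer `v_s` of `|·|_s` on `M_s` is strictly
positive in `Ω`, and the only minimizers of `|·|_s` on `M_s` are `v_s` and `-v_s`. -/
theorem minimizers_are_plus_minus_vs
    (N : ℕ) (Ω : Set (Euc N)) (hΩo : IsOpen Ω) (hΩb : Bornology.IsBounded Ω)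
    (hΩc : IsConnected Ω)
    (s : ℝ) (hs0 : 0 < s) (hs1 : s < 1)
    (ω : Euc N → ℝ) (hω_cont : ContinuousOn ω Ω) (hω_pos : ∀ x ∈ Ω, 0 < ω x)
    (hω_Lr : ∃ r : ℝ, 1 < r ∧ MemLp ω (ENNReal.ofReal r) (volume.restrict Ω))
    (hω_norm : ∫ x in Ω, ω x = 1)
    (hK : ∃ ε > (0 : ℝ), Keps N Ω ω ε < ⊤)
    (v : Euc N → ℝ) (hv : MemMs s Ω ω v) (hv_nn : ∀ x, 0 ≤ v x)
    (hv0 : ∀ x ∉ Ω, v x = 0) (hv_min : holderSemi s Ω v = muS s Ω ω)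
    (hv_unique : ∀ w : Euc N → ℝ, MemMs s Ω ω w → (∀ x, 0 ≤ w x) →
      (∀ x ∉ Ω, w x = 0) → holderSemi s Ω w = muS s Ω ω → w = v) :
    (∀ x ∈ Ω, 0 < v x) ∧
    ∀ w : Euc N → ℝ, MemMs s Ω ω w → (∀ x ∉ Ω, w x = 0) →
      holderSemi s Ω w = muS s Ω ω →
      w = v ∨ w = fun x => -(v x) :=
  minimizers_are_plus_minus_vs_general N Ω hΩo hΩc s hs0 hs1 ω hω_pos hω_norm v hv hv_nn hv0 hv_min
    hv_unique
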